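/- arXiv:2303.00235 — 4 statements merged into one kernel-verified Lean document; each statement's English description precedes it below -/
import Mathlib

section
/- Let F be a finite field with |F| = q and let g ∈ F with g ≠ 2 and g ≠ −2. Then the equation X² + gXY + Y² = −1 has a solution (s, s′) ∈ F × F. Moreover, there exists a solution (s, s′) with s′ = 0 if and only if q is even or 4 divides q − 1. -/
open Polynomial

theorem Nat.mod_four_ne_three_iff (n : ℕ) : n % 4 ≠ 3 ↔ Even n ∨ 4 ∣ n - 1 := by
  rw [Nat.even_iff]
  omega

namespace FiniteField

variable {F : Type*} [Field F] [Fintype F]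

theorem exists_sq_add_mul_sq_eq {c : F} (hc : c ≠ 0) (d : F) :
    ∃ a b : F, a ^ 2 + c * b ^ 2 = d := by
  by_cases hF : ringChar F = 2
  · obtain ⟨r, hr⟩ := isSquare_of_char_two hF d
    exact ⟨r, 0, by rw [hr]; ring⟩
  · obtain ⟨a, b, hab⟩ := exists_root_sum_quadratic (degree_X_pow_sub_C two_pos d)
      (degree_C_mul_X_pow 2 hc) (odd_card_of_char_ne_two hF)
    simp only [eval_sub, eval_pow, eval_X, eval_C, eval_mul] at hab
    exact ⟨a, b, by linear_combination hab⟩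

theorem exists_sq_add_mul_mul_add_sq_eq {g : F} (hg : g ≠ 2) (hg' : g ≠ -2) (d : F) :
    ∃ x y : F, x ^ 2 + g * x * y + y ^ 2 = d := by
  by_cases hF : ringChar F = 2
  · obtain ⟨r, hr⟩ := isSquare_of_char_two hF d
    exact ⟨r, 0, by rw [hr]; ring⟩
  · have h2 : (2 : F) ≠ 0 := Ring.two_ne_zero hF
    have hc : (2 - g) * (2 + g) ≠ 0 :=
      mul_ne_zero (sub_ne_zero.mpr hg.symm) fun h ↦ hg' (by linear_combination h)
    obtain ⟨a, b, hab⟩ := exists_sq_add_mul_sq_eq hc (4 * d)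
    -- completing the square: `4 (x² + g x y + y²) = (2x + g y)² + (4 - g²) y²`
    refine ⟨(a - g * b) / 2, b, ?_⟩
    field_simp
    linear_combination hab

end FiniteField

/-- Let `F` be a finite field with `|F| = q` and let `g ∈ F` with `g ≠ 2`
and `g ≠ −2`. Then the equation `X² + gXY + Y² = −1` has a solution `(s, s′) ∈ F × F`;
moreover, there exists a solution `(s, s′)` with `s′ = 0` if and only if `q` is even or
`4 ∣ q − 1`. -/
theorem consta_dihedral_stmt0 {F : Type*} [Field F] [Fintype F] (q : ℕ)
    (hq : q = Fintype.card F) (g : F) (hg : g ≠ 2) (hg' : g ≠ -2) :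
    (∃ s s' : F, s ^ 2 + g * s * s' + s' ^ 2 = -1) ∧
    ((∃ s s' : F, s' = 0 ∧ s ^ 2 + g * s * s' + s' ^ 2 = -1) ↔ (Even q ∨ 4 ∣ q - 1)) := by
  refine ⟨FiniteField.exists_sq_add_mul_mul_add_sq_eq hg hg' (-1), ?_⟩
  have h_axis : (∃ s s' : F, s' = 0 ∧ s ^ 2 + g * s * s' + s' ^ 2 = -1) ↔ IsSquare (-1 : F) :=
    ⟨fun ⟨s, _, hs', hs⟩ ↦ ⟨s, by subst hs'; linear_combination -hs⟩,
      fun ⟨r, hr⟩ ↦ ⟨r, 0, rfl, by rw [hr]; ring⟩⟩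
  rw [h_axis, FiniteField.isSquare_neg_one_iff, ← hq, Nat.mod_four_ne_three_iff]
end

section
/- The element e₀ := (ε₀, 0) is a central idempotent of A_n and the left ideal A_n·e₀ = F·(ε₀,0) ⊕ F·(0,ε₀) has F-dimension 2. Moreover: (1) if q is odd and 4 does not divide q − 1, then for every nonzero a ∈ A_n·e₀ there exists b ∈ A_n·e₀ with a·b = e₀, i.e. A_n·e₀ is a field with identity e₀, a degree-2 field extension of F ≅ F[X]/(X²+1); (2) if q is even or 4 divides q − 1, then there exists r ∈ F with r² = −1, and C₀ := A_n·(rε₀, ε₀) is a 1-dimensional left ideal of A_n with ⟨C₀, C₀⟩ = 0. -/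
open Polynomial

noncomputable section

namespace CDC

lemma natDegree_eq {F : Type*} [Field F] {n : ℕ} (h : (X ^ n - 1 : F[X]) ≠ 0) :
    (X ^ n - 1 : F[X]).natDegree = n := by
  rcases Nat.eq_zero_or_pos n with h0 | h0
  · subst h0; simp at h
  · have := Polynomial.natDegree_X_pow_sub_C (n := n) (r := (1 : F))
    simpa using this

open scoped Classical in
/-- coordinates of an element of `F[X]/(Xⁿ−1)` w.r.t. the basis `1, x, …, x^{n−1}`. -/
def coords {F : Type*} [Field F] {n : ℕ} (a : AdjoinRoot (X ^ n - 1 : F[X])) (i : Fin n) : F :=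
  if h : (X ^ n - 1 : F[X]) ≠ 0 then
    (AdjoinRoot.powerBasis h).basis.repr a (Fin.cast (natDegree_eq h).symm i)
  else 0

/-- Euclidean inner product on `A_n = R_n × R_n` w.r.t. the basis
`(xⁱ,0), (0,xⁱ)`, `0 ≤ i < n`. -/
def innerA {F : Type*} [Field F] {n : ℕ}
    (c d : AdjoinRoot (X ^ n - 1 : F[X]) × AdjoinRoot (X ^ n - 1 : F[X])) : F :=
  ∑ i : Fin n, coords c.1 i * coords d.1 i + ∑ i : Fin n, coords c.2 i * coords d.2 i

/-- the consta-dihedral multiplication `(a,b)·(c,d) = (ac − b·σ(d), ad + b·σ(c))`. -/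
def cdMul {R : Type*} [CommRing R] (σ : R → R) (z w : R × R) : R × R :=
  (z.1 * w.1 - z.2 * σ w.2, z.1 * w.2 + z.2 * σ w.1)

/-- `ε₀ = n⁻¹(1 + x + ⋯ + x^{n−1}) ∈ R_n`. -/
def eps0 (F : Type*) [Field F] (n : ℕ) : AdjoinRoot (X ^ n - 1 : F[X]) :=
  ((n : F)⁻¹) • ∑ i ∈ Finset.range n, (AdjoinRoot.root _) ^ i

/-!
Multiplication by `ε₀` factors through the augmentation `Rₙ → F`, `x ↦ 1`: since `x ε₀ = ε₀`,
every `a ∈ Rₙ` satisfies `a ε₀ = a(1) ε₀`. The automorphism `σ` preserves the augmentation and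
`σ ε₀` is again fixed by `x`, whence `σ ε₀ = ε₀`. Therefore `A_n e₀ = {(s ε₀, t ε₀)}`, with
`(s ε₀, t ε₀)(u ε₀, v ε₀) = ((su − tv) ε₀, (sv + tu) ε₀)`: the multiplication of `F[X]/(X² + 1)`,
a field exactly when `−1` is not a square in `F`, i.e. when `q ≡ 3 mod 4`. If `r² = −1`, then
`z (rε₀, ε₀) = (z₁(1) + r z₂(1)) (rε₀, ε₀)`, and `(rε₀, ε₀)` is isotropic because `r² + 1 = 0`.
-/

lemma natCast_ne_zero_of_coprime_card {F : Type*} [Field F] [Fintype F] {n : ℕ}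
    (h : n.Coprime (Fintype.card F)) : (n : F) ≠ 0 := fun hn =>
  (CharP.char_is_prime F (ringChar F)).ne_one <| Nat.eq_one_of_dvd_coprimes h
    ((CharP.cast_eq_zero_iff F _ n).mp hn)
    ((CharP.cast_eq_zero_iff F _ _).mp (FiniteField.cast_card_eq_zero F))

lemma mod_four_eq_three_iff (q : ℕ) : q % 4 = 3 ↔ Odd q ∧ ¬4 ∣ q - 1 := by
  rw [Nat.odd_iff]
  omega

lemma linearIndependent_inl_inr {F M : Type*} [Field F] [AddCommGroup M] [Module F M] {e : M}
    (he : e ≠ 0) : LinearIndependent F ![(e, (0 : M)), ((0 : M), e)] := by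
  rw [LinearIndependent.pair_iff]
  intro s t hst
  simpa [he] using hst

lemma finrank_span_inl_inr {F M : Type*} [Field F] [AddCommGroup M] [Module F M] {e : M}
    (he : e ≠ 0) :
    Module.finrank F (Submodule.span F {(e, 0), (0, e)} : Submodule F (M × M)) = 2 := by
  have := finrank_span_eq_card (linearIndependent_inl_inr (F := F) he)
  rw [Matrix.range_cons_cons_empty] at this
  simpa using this

section SqAddOne

variable (F : Type*) [Field F]

lemma natDegree_X_sq_add_one : (X ^ 2 + 1 : F[X]).natDegree = 2 := by
  simpa using natDegree_X_pow_add_C (n := 2) (r := (1 : F))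

def sqAddOneBasis : Module.Basis (Fin 2) F (AdjoinRoot (X ^ 2 + 1 : F[X])) :=
  (AdjoinRoot.powerBasis' (g := (X ^ 2 + 1 : F[X]))
    (by simpa using monic_X_pow_add_C (1 : F) two_ne_zero)).basis.reindex
    (finCongr (by simp [natDegree_X_sq_add_one]))

lemma sqAddOneBasis_zero : sqAddOneBasis F 0 = 1 := by
  rw [sqAddOneBasis, Module.Basis.reindex_apply, PowerBasis.basis_eq_pow]
  simp

lemma sqAddOneBasis_one : sqAddOneBasis F 1 = AdjoinRoot.root _ := by
  rw [sqAddOneBasis, Module.Basis.reindex_apply, PowerBasis.basis_eq_pow]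
  simp

lemma root_sq_eq_neg_one : (AdjoinRoot.root (X ^ 2 + 1 : F[X])) ^ 2 = -1 := by
  have h := AdjoinRoot.mk_self (f := (X ^ 2 + 1 : F[X]))
  rw [map_add, map_pow, AdjoinRoot.mk_X, map_one] at h
  exact eq_neg_of_add_eq_zero_left h

lemma exists_eq_smul_one_add_smul_root (u : AdjoinRoot (X ^ 2 + 1 : F[X])) :
    ∃ a b : F, u = a • 1 + b • AdjoinRoot.root _ := by
  refine ⟨(sqAddOneBasis F).repr u 0, (sqAddOneBasis F).repr u 1, ?_⟩
  conv_lhs => rw [← (sqAddOneBasis F).sum_repr u]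
  rw [Fin.sum_univ_two, sqAddOneBasis_zero, sqAddOneBasis_one]

lemma isField_adjoinRoot_sq_add_one (h : ¬IsSquare (-1 : F)) :
    IsField (AdjoinRoot (X ^ 2 + 1 : F[X])) := by
  have hirr : Irreducible (X ^ 2 + 1 : F[X]) := by
    refine irreducible_of_degree_le_three_of_not_isRoot ?_ fun x hx => h ⟨x, ?_⟩
    · simp [natDegree_X_sq_add_one]
    · simp only [IsRoot, eval_add, eval_pow, eval_X, eval_one] at hx
      linear_combination -hx
  have := Fact.mk hirr
  exact Field.toIsField _

end SqAddOne

section Character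

-- `e` plays the role of `ε₀` and `χ` that of the augmentation of `Rₙ`
variable {F R : Type*} [Field F] [CommRing R] [Algebra F R] {χ : R →ₐ[F] F} {e : R}
  {G : Type*} [FunLike G R R] {σ : G}

lemma cdMul_right_eq_smul [ZeroHomClass G R R] (he : ∀ a, a * e = χ a • e) (hσ : σ e = e)
    (z : R × R) :
    cdMul σ z (e, 0) = (χ z.1 • e, χ z.2 • e) := by
  simp [cdMul, hσ, he]

lemma cdMul_left_eq_cdMul_right [ZeroHomClass G R R] (hσ : σ e = e) (z : R × R) :
    cdMul σ (e, 0) z = cdMul σ z (e, 0) := by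
  simp [cdMul, hσ, mul_comm]

lemma cdMul_smul_smul [LinearMapClass G F R R] (hee : e * e = e) (hσ : σ e = e)
    (a b c d : F) :
    cdMul σ (a • e, b • e) (c • e, d • e) = ((a * c - b * d) • e, (a * d + b * c) • e) := by
  simp only [cdMul, map_smul, hσ, smul_mul_smul_comm, hee, sub_smul, add_smul]

lemma range_cdMul_right_eq_span [ZeroHomClass G R R] (he : ∀ a, a * e = χ a • e)
    (hσ : σ e = e) :
    Set.range (fun z => cdMul σ z (e, 0)) =
      (Submodule.span F {(e, 0), (0, e)} : Set (R × R)) := by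
  ext w
  simp only [Set.mem_range, cdMul_right_eq_smul he hσ, SetLike.mem_coe, Submodule.mem_span_pair]
  constructor
  · rintro ⟨z, rfl⟩
    exact ⟨χ z.1, χ z.2, by simp⟩
  · rintro ⟨s, t, rfl⟩
    exact ⟨(algebraMap F R s, algebraMap F R t), by simp⟩

lemma exists_linearMap_adjoinRoot_sq_add_one [LinearMapClass G F R R]
    (he : ∀ a, a * e = χ a • e) (hχe : χ e = 1) (hσ : σ e = e) :
    ∃ Ψ : AdjoinRoot (X ^ 2 + 1 : F[X]) →ₗ[F] R × R, Function.Injective Ψ ∧ Ψ 1 = (e, 0) ∧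
      (∀ u v, Ψ (u * v) = cdMul σ (Ψ u) (Ψ v)) ∧
      Set.range Ψ = Set.range (fun z => cdMul σ z (e, 0)) := by
  have he0 : e ≠ 0 := fun h => by simp [h] at hχe
  have hee : e * e = e := by rw [he, hχe, one_smul]
  set Ψ := (sqAddOneBasis F).constr F ![(e, 0), (0, e)]
  have hΨ (a b : F) : Ψ (a • 1 + b • AdjoinRoot.root _) = (a • e, b • e) := by
    rw [← sqAddOneBasis_zero, ← sqAddOneBasis_one]
    simp [Ψ]
  refine ⟨Ψ, (sqAddOneBasis F).injective_constr_of_linearIndependent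
    (linearIndependent_inl_inr he0), by simpa using hΨ 1 0, ?_, ?_⟩
  · intro u v
    obtain ⟨a, b, rfl⟩ := exists_eq_smul_one_add_smul_root F u
    obtain ⟨c, d, rfl⟩ := exists_eq_smul_one_add_smul_root F v
    have hmul : (a • 1 + b • AdjoinRoot.root _) * (c • 1 + d • AdjoinRoot.root _) =
        (a * c - b * d) • (1 : AdjoinRoot (X ^ 2 + 1 : F[X])) +
          (a * d + b * c) • AdjoinRoot.root _ := by
      simp only [Algebra.smul_def, map_sub, map_add, map_mul, mul_one]
      linear_combination (algebraMap F _ b * algebraMap F _ d) * root_sq_eq_neg_one F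
    rw [hmul, hΨ, hΨ, hΨ, cdMul_smul_smul hee hσ]
  · rw [range_cdMul_right_eq_span he hσ]
    ext w
    simp only [Set.mem_range, SetLike.mem_coe, Submodule.mem_span_pair]
    constructor
    · rintro ⟨u, rfl⟩
      obtain ⟨a, b, rfl⟩ := exists_eq_smul_one_add_smul_root F u
      exact ⟨a, b, by simp [hΨ]⟩
    · rintro ⟨a, b, rfl⟩
      exact ⟨a • 1 + b • AdjoinRoot.root _, by simp [hΨ]⟩

lemma exists_cdMul_eq_of_isField [LinearMapClass G F R R]
    (hK : IsField (AdjoinRoot (X ^ 2 + 1 : F[X])))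
    (he : ∀ a, a * e = χ a • e) (hχe : χ e = 1) (hσ : σ e = e) :
    ∀ a ∈ Set.range (fun z => cdMul σ z (e, 0)), a ≠ 0 →
      ∃ b ∈ Set.range (fun z => cdMul σ z (e, 0)), cdMul σ a b = (e, 0) := by
  obtain ⟨Ψ, -, hΨ1, hΨmul, hΨrange⟩ := exists_linearMap_adjoinRoot_sq_add_one he hχe hσ
  rw [← hΨrange]
  rintro _ ⟨u, rfl⟩ hu
  obtain ⟨v, huv⟩ := hK.mul_inv_cancel (show u ≠ 0 by rintro rfl; exact hu (map_zero Ψ))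
  exact ⟨Ψ v, ⟨v, rfl⟩, by rw [← hΨmul, huv, hΨ1]⟩

lemma cdMul_isotropic_eq_smul [LinearMapClass G F R R]
    (he : ∀ a, a * e = χ a • e) (hσ : σ e = e) {r : F} (hr : r ^ 2 = -1) (z : R × R) :
    cdMul σ z (r • e, e) = (χ z.1 + r * χ z.2) • (r • e, e) := by
  have h1 : z.1 * (r • e) - z.2 * σ e = ((χ z.1 + r * χ z.2) * r) • e := by
    rw [hσ, mul_smul_comm, he, he, smul_smul, ← sub_smul]
    congr 1
    linear_combination -(χ z.2) * hr
  have h2 : z.1 * e + z.2 * σ (r • e) = (χ z.1 + r * χ z.2) • e := by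
    rw [map_smul, hσ, mul_smul_comm, he, he, smul_smul, ← add_smul]
  rw [Prod.smul_mk, smul_smul, ← h1, ← h2]
  rfl

lemma span_range_cdMul_isotropic [LinearMapClass G F R R]
    (he : ∀ a, a * e = χ a • e) (hσ : σ e = e) {r : F} (hr : r ^ 2 = -1) :
    Submodule.span F (Set.range fun z => cdMul σ z (r • e, e)) =
      Submodule.span F {(r • e, e)} := by
  apply le_antisymm
  · rw [Submodule.span_le]
    rintro _ ⟨z, rfl⟩
    dsimp only
    rw [cdMul_isotropic_eq_smul he hσ hr]
    exact Submodule.smul_mem _ _ (Submodule.mem_span_singleton_self _)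
  · rw [Submodule.span_le, Set.singleton_subset_iff]
    refine Submodule.subset_span ⟨(1, 0), ?_⟩
    simp [cdMul_isotropic_eq_smul he hσ hr]

end Character

section CyclicAlgebra

variable {F : Type*} [Field F] {n : ℕ}

variable (F n) in
def augmentation : AdjoinRoot (X ^ n - 1 : F[X]) →ₐ[F] F :=
  AdjoinRoot.liftAlgHom _ (AlgHom.id F F) 1 (by simp)

@[simp]
lemma augmentation_root : augmentation F n (AdjoinRoot.root _) = 1 :=
  AdjoinRoot.liftAlgHom_root _ _ _ _

lemma root_pow_eq_one : (AdjoinRoot.root (X ^ n - 1 : F[X])) ^ n = 1 := by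
  have h := AdjoinRoot.mk_self (f := (X ^ n - 1 : F[X]))
  rwa [map_sub, map_pow, AdjoinRoot.mk_X, map_one, sub_eq_zero] at h

lemma mul_eq_augmentation_smul_of_root_mul {f : AdjoinRoot (X ^ n - 1 : F[X])}
    (hf : AdjoinRoot.root _ * f = f) (a : AdjoinRoot (X ^ n - 1 : F[X])) :
    a * f = augmentation F n a • f := by
  obtain ⟨p, rfl⟩ := AdjoinRoot.mk_surjective a
  obtain ⟨c, hc⟩ := sub_dvd_eval_sub (AdjoinRoot.root (X ^ n - 1 : F[X])) 1
    (p.map (algebraMap F _))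
  -- `a - a(1)` is a multiple of `x - 1`, which annihilates `f`
  have hf' : (AdjoinRoot.root (X ^ n - 1 : F[X]) - 1) * f = 0 := by
    rw [sub_mul, hf, one_mul, sub_self]
  simp only [eval_map_algebraMap, AdjoinRoot.aeval_eq] at hc
  rw [← sub_eq_zero, Algebra.smul_def, ← sub_mul, ← AdjoinRoot.aeval_eq,
    ← Polynomial.aeval_algHom_apply, augmentation_root, ← Polynomial.aeval_algebraMap_apply,
    map_one, AdjoinRoot.aeval_eq, hc, mul_right_comm, hf', zero_mul]

lemma root_mul_eps0 : AdjoinRoot.root _ * eps0 F n = eps0 F n := by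
  have h := geom_sum_mul (AdjoinRoot.root (X ^ n - 1 : F[X])) n
  rw [root_pow_eq_one, sub_self, mul_sub, mul_one, sub_eq_zero] at h
  rw [eps0, mul_smul_comm, mul_comm, h]

lemma augmentation_eps0 (hn : (n : F) ≠ 0) : augmentation F n (eps0 F n) = 1 := by
  simp [eps0, hn]

lemma mul_eps0 (a : AdjoinRoot (X ^ n - 1 : F[X])) :
    a * eps0 F n = augmentation F n a • eps0 F n :=
  mul_eq_augmentation_smul_of_root_mul root_mul_eps0 a

lemma augmentation_map {G : Type*} [FunLike G (AdjoinRoot (X ^ n - 1 : F[X]))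
    (AdjoinRoot (X ^ n - 1 : F[X]))] [AlgHomClass G F _ _] {σ : G}
    (hσ : σ (AdjoinRoot.root _) = AdjoinRoot.root _ ^ (n - 1))
    (a : AdjoinRoot (X ^ n - 1 : F[X])) :
    augmentation F n (σ a) = augmentation F n a := by
  have h : (augmentation F n).comp (AlgHomClass.toAlgHom σ) = augmentation F n :=
    AdjoinRoot.algHom_ext (by simp [hσ])
  exact DFunLike.congr_fun h a

lemma map_eps0 {G : Type*} [FunLike G (AdjoinRoot (X ^ n - 1 : F[X]))
    (AdjoinRoot (X ^ n - 1 : F[X]))] [AlgHomClass G F _ _] {σ : G} (hn : (n : F) ≠ 0)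
    (hσ : σ (AdjoinRoot.root _) = AdjoinRoot.root _ ^ (n - 1)) : σ (eps0 F n) = eps0 F n := by
  set f := σ (eps0 F n)
  have hf : AdjoinRoot.root _ * f = f := by
    -- `x ^ (n - 1)` is invertible with inverse `x`
    have h : AdjoinRoot.root _ ^ (n - 1) * f = f := by
      rw [← hσ, ← map_mul, root_mul_eps0]
    have hn0 : n ≠ 0 := by rintro rfl; simp at hn
    conv_lhs => rw [← h]
    rw [← mul_assoc, ← pow_succ', Nat.sub_add_cancel (Nat.one_le_iff_ne_zero.mpr hn0),
      root_pow_eq_one, one_mul]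
  calc f = eps0 F n * f := by
        rw [mul_eq_augmentation_smul_of_root_mul hf, augmentation_eps0 hn, one_smul]
    _ = eps0 F n := by
        rw [mul_comm, mul_eps0, augmentation_map hσ, augmentation_eps0 hn, one_smul]

lemma coords_smul (s : F) (a : AdjoinRoot (X ^ n - 1 : F[X])) (i : Fin n) :
    coords (s • a) i = s * coords a i := by
  unfold coords
  split_ifs
  · rw [map_smul, Finsupp.smul_apply, smul_eq_mul]
  · rw [mul_zero]

lemma innerA_smul_smul (s t : F)
    (c d : AdjoinRoot (X ^ n - 1 : F[X]) × AdjoinRoot (X ^ n - 1 : F[X])) :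
    innerA (s • c) (t • d) = s * t * innerA c d := by
  simp only [innerA, Prod.smul_fst, Prod.smul_snd, coords_smul, mul_add, Finset.mul_sum]
  congr 1 <;> exact Finset.sum_congr rfl fun _ _ => by ring

lemma innerA_isotropic {r : F} (hr : r ^ 2 = -1) (a : AdjoinRoot (X ^ n - 1 : F[X])) :
    innerA (r • a, a) (r • a, a) = 0 := by
  simp only [innerA, coords_smul, ← Finset.sum_add_distrib]
  exact Finset.sum_eq_zero fun _ _ => by linear_combination (coords a _) ^ 2 * hr

end CyclicAlgebra

theorem consta_dihedral_stmt2_general {F : Type*} [Field F] [Fintype F] (q : ℕ)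
    (hq : q = Fintype.card F) (n : ℕ)
    (hcop : Nat.Coprime n q)
    (σ : AdjoinRoot (X ^ n - 1 : F[X]) ≃ₐ[F] AdjoinRoot (X ^ n - 1 : F[X]))
    (hσ : σ (AdjoinRoot.root _) = (AdjoinRoot.root _) ^ (n - 1)) :
    (cdMul (⇑σ) (eps0 F n, 0) (eps0 F n, 0) = (eps0 F n, 0) ∧
      ∀ z, cdMul (⇑σ) (eps0 F n, 0) z = cdMul (⇑σ) z (eps0 F n, 0)) ∧
    (Set.range fun z => cdMul (⇑σ) z (eps0 F n, 0))
      = (Submodule.span F {(eps0 F n, (0 : AdjoinRoot (X ^ n - 1 : F[X]))),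
          ((0 : AdjoinRoot (X ^ n - 1 : F[X])), eps0 F n)} : Set _) ∧
    Module.finrank F (Submodule.span F {(eps0 F n, (0 : AdjoinRoot (X ^ n - 1 : F[X]))),
          ((0 : AdjoinRoot (X ^ n - 1 : F[X])), eps0 F n)}) = 2 ∧
    ((Odd q ∧ ¬ 4 ∣ q - 1) →
      (∀ a ∈ Set.range fun z => cdMul (⇑σ) z (eps0 F n, 0), a ≠ 0 →
        ∃ b ∈ Set.range fun z => cdMul (⇑σ) z (eps0 F n, 0),
          cdMul (⇑σ) a b = (eps0 F n, 0)) ∧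
      -- `A_n e₀` is a degree-2 field extension of `F`, isomorphic to `F[X]/(X²+1)`
      ∃ Ψ : (F[X] ⧸ Ideal.span {(X : F[X]) ^ 2 + 1})
          →ₗ[F] AdjoinRoot (X ^ n - 1 : F[X]) × AdjoinRoot (X ^ n - 1 : F[X]),
        Function.Injective Ψ ∧ Ψ 1 = (eps0 F n, 0) ∧
        (∀ u v, Ψ (u * v) = cdMul (⇑σ) (Ψ u) (Ψ v)) ∧
        Set.range Ψ = Set.range (fun z => cdMul (⇑σ) z (eps0 F n, 0))) ∧
    ((Even q ∨ 4 ∣ q - 1) →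
      ∃ r : F, r ^ 2 = -1 ∧
        Module.finrank F
          (Submodule.span F (Set.range fun z => cdMul (⇑σ) z (r • eps0 F n, eps0 F n))) = 1 ∧
        ∀ c d, (c ∈ Set.range fun z => cdMul (⇑σ) z (r • eps0 F n, eps0 F n)) →
          (d ∈ Set.range fun z => cdMul (⇑σ) z (r • eps0 F n, eps0 F n)) →
          innerA c d = 0) := by
  subst hq
  have hn := natCast_ne_zero_of_coprime_card hcop
  have hχe := augmentation_eps0 hn
  have hσe := map_eps0 hn hσ
  have he0 : eps0 F n ≠ 0 := fun h => by simp [h] at hχe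
  refine ⟨⟨by simp [cdMul, mul_eps0, hχe], cdMul_left_eq_cdMul_right hσe⟩,
    range_cdMul_right_eq_span mul_eps0 hσe, finrank_span_inl_inr he0, fun hcard => ?_,
    fun hcard => ?_⟩
  · have hsq : ¬IsSquare (-1 : F) := by
      rwa [FiniteField.isSquare_neg_one_iff, not_not, mod_four_eq_three_iff]
    exact ⟨exists_cdMul_eq_of_isField (isField_adjoinRoot_sq_add_one F hsq) mul_eps0 hχe hσe,
      exists_linearMap_adjoinRoot_sq_add_one mul_eps0 hχe hσe⟩
  · obtain ⟨r, hr⟩ := (FiniteField.isSquare_neg_one_iff (F := F)).mpr <| by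
      rw [Ne, mod_four_eq_three_iff, ← Nat.not_even_iff_odd]
      tauto
    have hr2 : r ^ 2 = -1 := by rw [sq, hr]
    refine ⟨r, hr2, ?_, ?_⟩
    · rw [span_range_cdMul_isotropic mul_eps0 hσe hr2]
      exact finrank_span_singleton fun h => he0 (congrArg Prod.snd h)
    · rintro _ _ ⟨z, rfl⟩ ⟨w, rfl⟩
      simp only [cdMul_isotropic_eq_smul mul_eps0 hσe hr2, innerA_smul_smul,
        innerA_isotropic hr2, mul_zero]

/-- `e₀ := (ε₀, 0)` is a central idempotent of `A_n` and the left ideal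
`A_n·e₀ = F·(ε₀,0) ⊕ F·(0,ε₀)` has `F`-dimension 2. Moreover: (1) if `q` is odd and
`4 ∤ q − 1` then every nonzero element of `A_n·e₀` has an inverse relative to the
identity `e₀`, i.e. `A_n e₀` is a field; (2) if `q` is even or `4 ∣ q − 1` then there is
`r ∈ F` with `r² = −1` such that `C₀ := A_n·(rε₀, ε₀)` is a 1-dimensional left ideal
with `⟨C₀, C₀⟩ = 0`. -/
theorem consta_dihedral_stmt2 {F : Type*} [Field F] [Fintype F] (q : ℕ)
    (hq : q = Fintype.card F) (n : ℕ) (hn : 1 < n) (hodd : Odd n)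
    (hcop : Nat.Coprime n q)
    (σ : AdjoinRoot (X ^ n - 1 : F[X]) ≃ₐ[F] AdjoinRoot (X ^ n - 1 : F[X]))
    (hσ : σ (AdjoinRoot.root _) = (AdjoinRoot.root _) ^ (n - 1)) :
    (cdMul (⇑σ) (eps0 F n, 0) (eps0 F n, 0) = (eps0 F n, 0) ∧
      ∀ z, cdMul (⇑σ) (eps0 F n, 0) z = cdMul (⇑σ) z (eps0 F n, 0)) ∧
    (Set.range fun z => cdMul (⇑σ) z (eps0 F n, 0))
      = (Submodule.span F {(eps0 F n, (0 : AdjoinRoot (X ^ n - 1 : F[X]))),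
          ((0 : AdjoinRoot (X ^ n - 1 : F[X])), eps0 F n)} : Set _) ∧
    Module.finrank F (Submodule.span F {(eps0 F n, (0 : AdjoinRoot (X ^ n - 1 : F[X]))),
          ((0 : AdjoinRoot (X ^ n - 1 : F[X])), eps0 F n)}) = 2 ∧
    ((Odd q ∧ ¬ 4 ∣ q - 1) →
      (∀ a ∈ Set.range fun z => cdMul (⇑σ) z (eps0 F n, 0), a ≠ 0 →
        ∃ b ∈ Set.range fun z => cdMul (⇑σ) z (eps0 F n, 0),
          cdMul (⇑σ) a b = (eps0 F n, 0)) ∧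
      -- `A_n e₀` is a degree-2 field extension of `F`, isomorphic to `F[X]/(X²+1)`
      ∃ Ψ : (F[X] ⧸ Ideal.span {(X : F[X]) ^ 2 + 1})
          →ₗ[F] AdjoinRoot (X ^ n - 1 : F[X]) × AdjoinRoot (X ^ n - 1 : F[X]),
        Function.Injective Ψ ∧ Ψ 1 = (eps0 F n, 0) ∧
        (∀ u v, Ψ (u * v) = cdMul (⇑σ) (Ψ u) (Ψ v)) ∧
        Set.range Ψ = Set.range (fun z => cdMul (⇑σ) z (eps0 F n, 0))) ∧
    ((Even q ∨ 4 ∣ q - 1) →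
      ∃ r : F, r ^ 2 = -1 ∧
        Module.finrank F
          (Submodule.span F (Set.range fun z => cdMul (⇑σ) z (r • eps0 F n, eps0 F n))) = 1 ∧
        ∀ c d, (c ∈ Set.range fun z => cdMul (⇑σ) z (r • eps0 F n, eps0 F n)) →
          (d ∈ Set.range fun z => cdMul (⇑σ) z (r • eps0 F n, eps0 F n)) →
          innerA c d = 0) :=
  consta_dihedral_stmt2_general q hq n hcop σ hσ

end CDC
end
end

section
/- Assume q is odd and 4 does not divide q − 1. Then there exist odd integers n₁ < n₂ < ⋯, each greater than 1 and coprime to q, such that: (i) log_q(n_i)/λ(n_i) → 0 as i → ∞; (ii) for every i, −1 belongs to the cyclic subgroup of (ℤ/n_iℤ)^× generated by q; and (iii) for every i, the multiplicative order of q in (ℤ/n_iℤ)^× is divisible by 2 but not by 4. -/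
/-! Take `n = primorial (m + 3)`: then `n ≡ 2 [MOD 4]` and `n` has at least two prime factors.
A prime dividing both `n` and `Φ n q` divides `Φ n q` only once and is the largest prime factor
of `n`; since `|Φ n q| > (q - 1) ^ φ n ≥ 2 ^ φ n` exceeds every prime factor of `n`, some prime
`p ∣ Φ n q` does not divide `n`. Then `q` has order exactly `n` modulo `p`, so `λ(p) = n` and
`q ^ (n / 2) ≡ -1 [ZMOD p]`, while `p ≤ Φ n q ≤ (q + 1) ^ φ n` gives
`log_q p / λ(p) ≤ 2 φ(n) / n = 2 ∏_{ℓ ≤ m + 3} (1 - 1/ℓ)`, which tends to `0` because the sum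
of the reciprocals of the primes diverges. -/

noncomputable section

namespace CDC

/-- `λ(n)`: the minimum, over the prime divisors `p` of `n`, of the multiplicative order
of `q` modulo `p`. -/
def lam (q n : ℕ) : ℕ :=
  sInf ((fun p => orderOf ((q : ZMod p))) '' ↑n.primeFactors)

open Polynomial Filter Topology
open scoped Nat

theorem isPrimitiveRoot_ordCompl_of_dvd_cyclotomic_eval {p n : ℕ} [hp : Fact p.Prime]
    (hn : n ≠ 0) {q : ℤ} (hpq : (p : ℤ) ∣ (cyclotomic n ℤ).eval q) :
    IsPrimitiveRoot (q : ZMod p) (ordCompl[p] n) := by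
  have := NeZero.of_not_dvd (ZMod p) (Nat.not_dvd_ordCompl hp.out hn)
  rw [← isRoot_cyclotomic_prime_pow_mul_iff_of_charP (k := n.factorization p),
    Nat.ordProj_mul_ordCompl_eq_self, IsRoot.def, ← map_cyclotomic_int, eval_intCast_map,
    eq_intCast, ZMod.intCast_zmod_eq_zero_iff_dvd]
  exact hpq

theorem lt_of_dvd_cyclotomic_eval {p r n : ℕ} [hp : Fact p.Prime] (hr : r.Prime) (hn : n ≠ 0)
    {q : ℤ} (hpq : (p : ℤ) ∣ (cyclotomic n ℤ).eval q) (hrn : r ∣ n) (hrp : r ≠ p) : r < p := by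
  have hζ := isPrimitiveRoot_ordCompl_of_dvd_cyclotomic_eval hn hpq
  have hpr : ¬ p ∣ r := fun h => hrp ((Nat.prime_dvd_prime_iff_eq hp.out hr).1 h).symm
  have hr_dvd : r ∣ p - 1 := (Nat.dvd_ordCompl_of_dvd_not_dvd hrn hpr).trans <|
    hζ.eq_orderOf ▸ ZMod.orderOf_dvd_card_sub_one (hζ.ne_zero (Nat.ordCompl_pos p hn).ne')
  have := Nat.le_of_dvd (Nat.sub_pos_of_lt hp.out.one_lt) hr_dvd
  omega

theorem cyclotomic_dvd_geom_sum_X_pow {R : Type*} [CommRing R] [IsDomain R] {d m : ℕ}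
    (hd : d ≠ 0) (hm : 1 < m) : cyclotomic (d * m) R ∣ ∑ i ∈ Finset.range m, (X ^ d) ^ i := by
  have hmem : d ∈ (d * m).properDivisors :=
    Nat.mem_properDivisors.2 ⟨dvd_mul_right d m, lt_mul_right (Nat.pos_of_ne_zero hd) hm⟩
  have hne : (X ^ d - 1 : R[X]) ≠ 0 := by
    simpa using X_pow_sub_C_ne_zero (Nat.pos_of_ne_zero hd) (1 : R)
  have h := X_pow_sub_one_mul_cyclotomic_dvd_X_pow_sub_one_of_dvd R hmem
  rw [pow_mul, ← geom_sum_mul (X ^ d) m, mul_comm _ (X ^ d - 1)] at h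
  exact (mul_dvd_mul_iff_left hne).1 h

theorem not_sq_dvd_cyclotomic_eval {p n : ℕ} [hp : Fact p.Prime] (hp2 : p ≠ 2) (hn : n ≠ 0)
    (hpn : p ∣ n) (q : ℤ) : ¬ (p : ℤ) ^ 2 ∣ (cyclotomic n ℤ).eval q := by
  intro hsq
  obtain ⟨d, rfl⟩ := hpn
  have hζ := isPrimitiveRoot_ordCompl_of_dvd_cyclotomic_eval hn
    ((dvd_pow_self _ two_ne_zero).trans hsq)
  have hord : ordCompl[p] (p * d) ∣ d := Nat.Coprime.dvd_of_dvd_mul_left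
    ((hp.out.coprime_iff_not_dvd.2 (Nat.not_dvd_ordCompl hp.out hn)).symm) (Nat.ordCompl_dvd _ _)
  -- `q ^ d ≡ 1 [ZMOD p]`, so the geometric sum below is `≡ p [ZMOD p ^ 2]`
  obtain ⟨b, hb⟩ : (p : ℤ) ∣ q ^ d - 1 := by
    rw [← ZMod.intCast_zmod_eq_zero_iff_dvd, Int.cast_sub, Int.cast_pow, Int.cast_one, sub_eq_zero]
    exact (hζ.pow_eq_one_iff_dvd d).2 hord
  have hgeom : (cyclotomic (p * d) ℤ).eval q ∣
      ∑ i ∈ Finset.range p, (1 + p * b) ^ i * 1 ^ (p - 1 - i) := by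
    have := eval_dvd (x := q)
      (cyclotomic_dvd_geom_sum_X_pow (R := ℤ) (right_ne_zero_of_mul hn) hp.out.one_lt)
    rw [mul_comm d p] at this
    simpa [eval_finsetSum, ← hb] using this
  have h := dvd_sub (hsq.trans hgeom) (odd_sq_dvd_geom_sum₂_sub 1 b (hp.out.odd_of_ne_two hp2))
  rw [sub_sub_cancel, one_pow, mul_one, sq] at h
  exact (Nat.prime_iff_prime_int.mp hp.out).not_dvd_one
    ((mul_dvd_mul_iff_left (Int.natCast_ne_zero.2 hp.out.ne_zero)).1 (by simpa using h))

theorem natAbs_cyclotomic_eval_le_of_forall_dvd {p n : ℕ} [hp : Fact p.Prime] (hn : n ≠ 0)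
    (hn' : ¬ IsPrimePow n) {q : ℤ}
    (hprim : ∀ r : ℕ, r.Prime → (r : ℤ) ∣ (cyclotomic n ℤ).eval q → r ∣ n)
    (hpq : (p : ℤ) ∣ (cyclotomic n ℤ).eval q) : ((cyclotomic n ℤ).eval q).natAbs ≤ p := by
  set C := ((cyclotomic n ℤ).eval q).natAbs
  have hpn : p ∣ n := hprim p hp.out hpq
  -- a prime factor of `Φ n q` dividing `n` exceeds all other prime factors of `n`
  have hunique : ∀ {r}, r.Prime → r ∣ C → r = p := by
    intro r hr hrC
    have := Fact.mk hr
    by_contra hrp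
    have := lt_of_dvd_cyclotomic_eval hr hn hpq (hprim r hr (Int.natCast_dvd.2 hrC)) hrp
    have := lt_of_dvd_cyclotomic_eval hp.out hn (Int.natCast_dvd.2 hrC) hpn (Ne.symm hrp)
    omega
  have hp2 : p ≠ 2 := by
    obtain ⟨s, ⟨hs, hsn⟩, hsp⟩ : ∃ s, (s.Prime ∧ s ∣ n) ∧ s ≠ p := by
      by_contra! h
      exact hn' (isPrimePow_iff_unique_prime_dvd.2 ⟨p, ⟨hp.out, hpn⟩, fun s hs => h s hs⟩)
    have := lt_of_dvd_cyclotomic_eval hs hn hpq hsn hsp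
    have := hs.two_le
    omega
  have hC0 : C ≠ 0 := fun h => by
    have := hunique Nat.prime_two (by simp [h])
    have := hunique Nat.prime_three (by simp [h])
    omega
  obtain ⟨k, hk⟩ : ∃ k, C = p ^ k := ⟨_, Nat.eq_prime_pow_of_unique_prime_dvd hC0 hunique⟩
  have hk1 : k ≤ 1 := by
    by_contra hk1
    refine not_sq_dvd_cyclotomic_eval hp2 hn hpn q (Int.natCast_dvd.2 ?_)
    show p ^ 2 ∣ C
    exact hk ▸ pow_dvd_pow p (by omega)
  calc C = p ^ k := hk
    _ ≤ p ^ 1 := Nat.pow_le_pow_right hp.out.pos hk1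
    _ = p := pow_one p

theorem exists_prime_dvd_cyclotomic_eval_not_dvd {q n : ℕ} (hq : 3 ≤ q) (hn : 1 < n)
    (hn' : ¬ IsPrimePow n) :
    ∃ p : ℕ, p.Prime ∧ (p : ℤ) ∣ (cyclotomic n ℤ).eval (q : ℤ) ∧ ¬ p ∣ n := by
  set C := ((cyclotomic n ℤ).eval (q : ℤ)).natAbs
  have hC : 2 ^ φ n < C := (Nat.pow_le_pow_left (by omega) _).trans_lt
    (sub_one_pow_totient_lt_natAbs_cyclotomic_eval hn (by omega))
  obtain ⟨p, hp, hpC⟩ :=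
    Nat.exists_prime_and_dvd (show C ≠ 1 by have := @Nat.one_le_two_pow (φ n); omega)
  have := Fact.mk hp
  by_contra! hprim
  have hCp := natAbs_cyclotomic_eval_le_of_forall_dvd (by omega) hn' hprim (Int.natCast_dvd.2 hpC)
  have hp_le : p - 1 ≤ φ n := by
    simpa [Nat.totient_prime hp] using Nat.le_of_dvd (Nat.totient_pos.2 (by omega))
      (Nat.totient_dvd_of_dvd (hprim p hp (Int.natCast_dvd.2 hpC)))
  have := Nat.lt_two_pow_self (n := p - 1)
  have := Nat.pow_le_pow_right two_pos hp_le
  omega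

theorem exists_prime_orderOf_eq_le {q n : ℕ} (hq : 3 ≤ q) (hn : 1 < n) (hn' : ¬ IsPrimePow n) :
    ∃ p : ℕ, p.Prime ∧ orderOf (q : ZMod p) = n ∧ (p : ℝ) ≤ (q + 1) ^ φ n := by
  obtain ⟨p, hp, hpq, hpn⟩ := exists_prime_dvd_cyclotomic_eval_not_dvd hq hn hn'
  have := Fact.mk hp
  refine ⟨p, hp, ?_, ?_⟩
  · have hζ := isPrimitiveRoot_ordCompl_of_dvd_cyclotomic_eval (by omega : n ≠ 0) hpq
    rw [Nat.factorization_eq_zero_of_not_dvd hpn, pow_zero, Nat.div_one, Int.cast_natCast] at hζ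
    exact hζ.eq_orderOf.symm
  · have hq1 : (1 : ℝ) < q := by exact_mod_cast (by omega : 1 < q)
    have hpC : (p : ℤ) ≤ (cyclotomic n ℤ).eval (q : ℤ) :=
      Int.le_of_dvd (cyclotomic_pos' n (by exact_mod_cast (by omega : 1 < q))) hpq
    have hC : (((cyclotomic n ℤ).eval (q : ℤ) : ℤ) : ℝ) = (cyclotomic n ℝ).eval (q : ℝ) := by
      simpa using (cyclotomic.eval_apply (q : ℤ) n (Int.castRingHom ℝ)).symm
    calc (p : ℝ) ≤ (cyclotomic n ℝ).eval (q : ℝ) := by rw [← hC]; exact_mod_cast hpC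
      _ ≤ (q + 1) ^ φ n := cyclotomic_eval_le_add_one_pow_totient hq1 n

theorem lam_prime {q p : ℕ} (hp : p.Prime) : lam q p = orderOf (q : ZMod p) := by
  simp [lam, hp.primeFactors]

theorem neg_one_mem_powers_of_two_dvd_orderOf {R : Type*} [CommRing R] [IsDomain R] {x : R}
    (h0 : orderOf x ≠ 0) (h2 : 2 ∣ orderOf x) : (-1 : R) ∈ Submonoid.powers x := by
  obtain ⟨k, hk⟩ := h2
  have hk0 : k ≠ 0 := by rintro rfl; exact h0 hk
  have := (IsPrimitiveRoot.orderOf x).pow_of_dvd hk0 (hk ▸ dvd_mul_left k 2)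
  rw [hk, Nat.mul_div_cancel _ (Nat.pos_of_ne_zero hk0)] at this
  exact ⟨k, this.eq_neg_one_of_two_right⟩

theorem coprime_of_orderOf_ne_zero {p q : ℕ} [hp : Fact p.Prime]
    (h : orderOf (q : ZMod p) ≠ 0) : p.Coprime q :=
  hp.out.coprime_iff_not_dvd.2 fun hpq =>
    (IsPrimitiveRoot.orderOf _).ne_zero h ((ZMod.natCast_eq_zero_iff q p).2 hpq)

theorem properties_of_orderOf_mod_four_eq_two {q p : ℕ} (hp : p.Prime)
    (hord : orderOf (q : ZMod p) % 4 = 2) :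
    (1 < p ∧ Odd p ∧ p.Coprime q) ∧ ((-1 : ZMod p) ∈ Submonoid.powers (q : ZMod p) ∧
      2 ∣ orderOf (q : ZMod p) ∧ ¬ 4 ∣ orderOf (q : ZMod p)) := by
  have := Fact.mk hp
  have h0 : orderOf (q : ZMod p) ≠ 0 := by omega
  have hp2 : p ≠ 2 := by
    rintro rfl
    have := ZMod.orderOf_lt one_lt_two (q : ZMod 2)
    omega
  exact ⟨⟨hp.one_lt, hp.odd_of_ne_two hp2, coprime_of_orderOf_ne_zero h0⟩,
    neg_one_mem_powers_of_two_dvd_orderOf h0 (by omega), by omega, by omega⟩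

theorem not_isPrimePow_primorial {m : ℕ} (hm : 3 ≤ m) : ¬ IsPrimePow (primorial m) := by
  rw [isPrimePow_iff_unique_prime_dvd]
  rintro ⟨p, -, hp⟩
  have h2 := hp 2 ⟨Nat.prime_two, Nat.prime_two.dvd_primorial_iff.2 (by omega)⟩
  have h3 := hp 3 ⟨Nat.prime_three, Nat.prime_three.dvd_primorial_iff.2 hm⟩
  omega

theorem primorial_mod_four {m : ℕ} (hm : 2 ≤ m) : primorial m % 4 = 2 := by
  have h2 := Nat.prime_two.dvd_primorial_iff.2 hm
  have h4 : ¬ 4 ∣ primorial m := fun h =>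
    absurd (Nat.isUnit_iff.1 (squarefree_primorial m 2 h)) (by norm_num)
  omega

theorem totient_div_le_exp_neg_sum_inv (n : ℕ) :
    (φ n : ℝ) / n ≤ Real.exp (-∑ p ∈ n.primeFactors, (p : ℝ)⁻¹) := by
  rcases eq_or_ne n 0 with rfl | hn
  · simp only [Nat.totient_zero, Nat.cast_zero, div_zero]
    positivity
  have h : (φ n : ℝ) / n = ∏ p ∈ n.primeFactors, (1 - (p : ℝ)⁻¹) := by
    have := congrArg (fun x : ℚ => (x : ℝ)) (Nat.totient_eq_mul_prod_factors n)
    push_cast at this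
    rw [this, mul_div_cancel_left₀ _ (Nat.cast_ne_zero.2 hn)]
  rw [h, ← Finset.sum_neg_distrib, Real.exp_sum]
  refine Finset.prod_le_prod (fun p hp => ?_) (fun p _ => Real.one_sub_le_exp_neg _)
  have : (1 : ℝ) ≤ p := by exact_mod_cast (Nat.prime_of_mem_primeFactors hp).one_lt.le
  linarith [inv_le_one_of_one_le₀ this]

theorem tendsto_sum_inv_primesLE :
    Tendsto (fun m => ∑ p ∈ Nat.primesLE m, (p : ℝ)⁻¹) atTop atTop := by
  have h := (not_summable_iff_tendsto_nat_atTop_of_nonneg (fun n => ?_)).1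
    not_summable_one_div_on_primes
  · refine (h.comp (tendsto_add_atTop_nat 1)).congr fun m => ?_
    simp [Nat.primesLE_eq_filter_range, Finset.sum_filter, Set.indicator_apply]
  · exact Set.indicator_nonneg (fun n _ => by positivity) n

theorem tendsto_totient_primorial_div :
    Tendsto (fun m => (φ (primorial m) : ℝ) / primorial m) atTop (𝓝 0) :=
  squeeze_zero (fun m => by positivity)
    (fun m => by simpa [primeFactors_primorial] using totient_div_le_exp_neg_sum_inv (primorial m))
    (Real.tendsto_exp_neg_atTop_nhds_zero.comp tendsto_sum_inv_primesLE)

theorem logb_le_two_mul_totient {q p n : ℕ} (hq : 2 ≤ q) (hp : 0 < p)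
    (hpn : (p : ℝ) ≤ (q + 1) ^ φ n) : Real.logb q p ≤ 2 * φ n := by
  have hq1 : (1 : ℝ) < q := by exact_mod_cast hq
  have hq2 : (q : ℝ) + 1 ≤ (q : ℝ) ^ 2 := by
    have : (2 : ℝ) ≤ q := by exact_mod_cast hq
    nlinarith
  calc Real.logb q p ≤ Real.logb q ((q + 1) ^ φ n) :=
        Real.logb_le_logb_of_le hq1 (by exact_mod_cast hp) hpn
    _ = φ n * Real.logb q (q + 1) := Real.logb_pow _ _ _
    _ ≤ φ n * Real.logb q ((q : ℝ) ^ 2) :=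
        mul_le_mul_of_nonneg_left (Real.logb_le_logb_of_le hq1 (by positivity) hq2) (by positivity)
    _ = 2 * φ n := by rw [Real.logb_pow, Real.logb_self_eq_one hq1]; ring

theorem tendsto_logb_div_of_le_add_one_pow_totient {q : ℕ} (hq : 2 ≤ q) {p n : ℕ → ℕ}
    (hp : ∀ m, 0 < p m) (hpn : ∀ m, (p m : ℝ) ≤ (q + 1) ^ φ (n m))
    (hn : Tendsto (fun m => (φ (n m) : ℝ) / n m) atTop (𝓝 0)) :
    Tendsto (fun m => Real.logb q (p m) / n m) atTop (𝓝 0) := by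
  refine squeeze_zero (fun m => div_nonneg ?_ (Nat.cast_nonneg _)) (fun m => ?_)
    (by simpa using hn.const_mul 2)
  · exact Real.logb_nonneg (by exact_mod_cast hq) (by exact_mod_cast hp m)
  · rw [mul_div_assoc']
    exact div_le_div_of_nonneg_right (logb_le_two_mul_totient hq (hp m) (hpn m))
      (Nat.cast_nonneg _)

theorem consta_dihedral_stmt17_general (q : ℕ) (hq : IsPrimePow q) (hodd : Odd q) :
    ∃ nseq : ℕ → ℕ, StrictMono nseq ∧
      (∀ i, 1 < nseq i ∧ Odd (nseq i) ∧ Nat.Coprime (nseq i) q) ∧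
      Filter.Tendsto (fun i => Real.logb q (nseq i) / (lam q (nseq i) : ℝ))
        Filter.atTop (nhds 0) ∧
      ∀ i, (-1 : ZMod (nseq i)) ∈ Submonoid.powers ((q : ZMod (nseq i))) ∧
        2 ∣ orderOf ((q : ZMod (nseq i))) ∧ ¬ 4 ∣ orderOf ((q : ZMod (nseq i))) := by
  have hq3 : 3 ≤ q := by obtain ⟨k, rfl⟩ := hodd; have := hq.two_le; omega
  choose p hp hord hpC using fun m => exists_prime_orderOf_eq_le hq3
    ((lt_primorial_self (by omega : 2 < m + 3)).trans' (by omega))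
    (not_isPrimePow_primorial (m := m + 3) (by omega))
  have hlam : ∀ m, lam q (p m) = primorial (m + 3) := fun m => (lam_prime (hp m)).trans (hord m)
  have hratio : Tendsto (fun m => Real.logb q (p m) / (lam q (p m) : ℝ)) atTop (𝓝 0) := by
    simpa only [hlam] using tendsto_logb_div_of_le_add_one_pow_totient (by omega)
      (fun m => (hp m).pos) hpC (tendsto_totient_primorial_div.comp (tendsto_add_atTop_nat 3))
  have hprops := fun m => properties_of_orderOf_mod_four_eq_two (hp m)
    ((hord m).symm ▸ primorial_mod_four (by omega))
  obtain ⟨s, hs, hps⟩ := Filter.strictMono_subseq_of_id_le fun m =>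
    (le_primorial_self.trans (hord m ▸ ZMod.orderOf_lt (hp m).one_lt _).le).trans' (by omega)
  exact ⟨p ∘ s, hps, fun i => (hprops (s i)).1, hratio.comp hs.tendsto_atTop,
    fun i => (hprops (s i)).2⟩

/-- Assume the prime power `q` is odd and `4 ∤ q − 1`. Then there are
odd integers `n₁ < n₂ < ⋯`, each `> 1` and coprime to `q`, such that (i)
`log_q(n_i)/λ(n_i) → 0`; (ii) `−1` lies in the cyclic subgroup of `(ℤ/n_iℤ)ˣ` generated
by `q`; and (iii) the multiplicative order of `q` mod `n_i` is divisible by 2 but not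
by 4. -/
theorem consta_dihedral_stmt17 (q : ℕ) (hq : IsPrimePow q) (hodd : Odd q)
    (h4 : ¬ 4 ∣ q - 1) :
    ∃ nseq : ℕ → ℕ, StrictMono nseq ∧
      (∀ i, 1 < nseq i ∧ Odd (nseq i) ∧ Nat.Coprime (nseq i) q) ∧
      Filter.Tendsto (fun i => Real.logb q (nseq i) / (lam q (nseq i) : ℝ))
        Filter.atTop (nhds 0) ∧
      ∀ i, (-1 : ZMod (nseq i)) ∈ Submonoid.powers ((q : ZMod (nseq i))) ∧
        2 ∣ orderOf ((q : ZMod (nseq i))) ∧ ¬ 4 ∣ orderOf ((q : ZMod (nseq i))) :=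
  consta_dihedral_stmt17_general q hq hodd

end CDC
end
end

section
/- Let ε be a primitive idempotent of R_n with σ(ε) ≠ ε, and set e = ψ(ε), ē = ψ(σ(ε)) ∈ FG. Then e + ē is a central idempotent of FG; K := R_n/(1−ε)R_n is a finite field (a field extension of F); and there exists an injective F-linear multiplicative map Φ : M₂(K) → FG with Φ(I₂) = e + ē, whose image is the two-sided ideal FG·(e + ē), and which satisfies bar(Φ([[a,b],[c,d]])) = Φ([[d,b],[c,a]]) for all a, b, c, d ∈ K. -/
/-!
Since `n` is invertible in `F`, `R_n` is a finite reduced ring, so for the primitive idempotent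
`ε` the ring `K = R_n ⧸ (1 - ε)`, which is isomorphic to the corner `ε R_n`, is a field.
Conjugation by the reflection `s = sr 0` acts on `ψ(R_n)` as `σ` and `s² = 1`; since `ε` and
`σ ε` are distinct primitive idempotents they are orthogonal, so `e = ψ(ε)` has `e s e = 0`. Hence
`ψ(k ε)`, `ψ(k ε) s`, `s ψ(k ε)`, `s ψ(k ε) s` multiply like `k` times the four matrix units,
giving an embedding `M₂(K) → FG` with unit `e + s e s = e + ē`. Its image is `FG (e + ē)`
because `FG = ψ(R_n) + s ψ(R_n)`, and `bar`, which fixes `s` and acts as `σ` on `ψ(R_n)`,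
swaps the diagonal entries.
-/

open Polynomial

noncomputable section

namespace CDC

set_option maxHeartbeats 1000000
set_option synthInstance.maxHeartbeats 400000

/-- an idempotent `ε ≠ 0` is primitive if it is not the sum of two nonzero orthogonal
idempotents. -/
def IsPrimitiveIdem {R : Type*} [CommRing R] (ε : R) : Prop :=
  IsIdempotentElem ε ∧ ε ≠ 0 ∧
    ¬ ∃ ε' ε'' : R, IsIdempotentElem ε' ∧ IsIdempotentElem ε'' ∧ ε' ≠ 0 ∧ ε'' ≠ 0 ∧
      ε' * ε'' = 0 ∧ ε = ε' + ε''

/-- the bar map of a group algebra: the `F`-linear anti-automorphism sending each group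
element `g` to `g⁻¹`. -/
def barFG {F G : Type*} [Field F] [Group G] (a : MonoidAlgebra F G) : MonoidAlgebra F G :=
  MonoidAlgebra.ofCoeff (Finsupp.mapDomain (fun g => g⁻¹) a.coeff)

section Bar

variable {F G : Type*} [Field F] [Group G]

lemma barFG_single (g : G) (c : F) :
    barFG (MonoidAlgebra.single g c) = MonoidAlgebra.single g⁻¹ c := by
  simp [barFG]

lemma barFG_of (g : G) : barFG (MonoidAlgebra.of F G g) = MonoidAlgebra.of F G g⁻¹ :=
  barFG_single g 1

lemma barFG_add (x y : MonoidAlgebra F G) : barFG (x + y) = barFG x + barFG y := by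
  simp [barFG, Finsupp.mapDomain_add]

lemma barFG_smul (c : F) (x : MonoidAlgebra F G) : barFG (c • x) = c • barFG x := by
  simp [barFG, Finsupp.mapDomain_smul]

lemma barFG_mul (x y : MonoidAlgebra F G) : barFG (x * y) = barFG y * barFG x := by
  induction x using MonoidAlgebra.induction_on with
  | of g =>
    induction y using MonoidAlgebra.induction_on with
    | of h => rw [← map_mul, barFG_of, barFG_of, barFG_of, mul_inv_rev, map_mul]
    | add y₁ y₂ h₁ h₂ => rw [mul_add, barFG_add, h₁, h₂, barFG_add, add_mul]
    | smul c y h => rw [mul_smul_comm, barFG_smul, h, barFG_smul, smul_mul_assoc]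
  | add x₁ x₂ h₁ h₂ => rw [add_mul, barFG_add, h₁, h₂, barFG_add, mul_add]
  | smul c x h => rw [smul_mul_assoc, barFG_smul, h, barFG_smul, mul_smul_comm]

def barFGAddHom : MonoidAlgebra F G →+ MonoidAlgebra F G :=
  AddMonoidHom.mk' barFG barFG_add

end Bar

lemma exists_isIdempotentElem_pow {M : Type*} [Monoid M] [Finite M] (a : M) :
    ∃ m ≠ 0, IsIdempotentElem (a ^ m) := by
  obtain ⟨i, j, hne, hij⟩ := Finite.exists_ne_map_eq_of_infinite (a ^ · : ℕ → M)
  wlog hlt : i < j generalizing i j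
  · exact this j i hne.symm hij.symm (by omega)
  obtain ⟨p, rfl⟩ := Nat.exists_eq_add_of_lt hlt
  have hshift : ∀ s, i ≤ s → a ^ (s + (p + 1)) = a ^ s := fun s hs => by
    obtain ⟨t, rfl⟩ := Nat.exists_eq_add_of_le hs
    rw [add_right_comm, pow_add, ← add_assoc, ← hij, ← pow_add]
  have periodic : ∀ k s, i ≤ s → a ^ (s + k * (p + 1)) = a ^ s := by
    intro k
    induction k with
    | zero => simp
    | succ k ih =>
      intro s hs
      rw [add_one_mul, ← add_assoc, hshift _ (by omega), ih s hs]
  refine ⟨(i + 1) * (p + 1), by positivity, ?_⟩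
  rw [IsIdempotentElem, ← pow_add, periodic _ _ (by nlinarith)]

lemma isField_of_isIdempotentElem_eq_zero_or_one {K : Type*} [CommRing K] [Finite K]
    [Nontrivial K] [IsReduced K] (h : ∀ e : K, IsIdempotentElem e → e = 0 ∨ e = 1) :
    IsField K := by
  refine ⟨exists_pair_ne K, mul_comm, fun {a} ha => ?_⟩
  obtain ⟨m, hm, hidem⟩ := exists_isIdempotentElem_pow a
  have hpow : a ^ m = 1 := (h _ hidem).resolve_left fun h0 => ha (IsNilpotent.eq_zero ⟨m, h0⟩)
  exact ⟨a ^ (m - 1), by rw [← pow_succ', Nat.sub_add_cancel (Nat.pos_of_ne_zero hm), hpow]⟩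

section Primitive

variable {R : Type*} [CommRing R] {e f : R}

lemma IsPrimitiveIdem.eq_zero_or_eq_of_mul_eq (he : IsPrimitiveIdem e)
    (hf : IsIdempotentElem f) (hfe : f * e = f) : f = 0 ∨ f = e := by
  by_contra! h
  refine he.2.2 ⟨f, e - f, hf, ?_, h.1, sub_ne_zero.mpr h.2.symm, ?_, by ring⟩
  · rw [IsIdempotentElem]
    linear_combination he.1.eq + hf.eq - 2 * hfe
  · linear_combination hfe - hf.eq

lemma IsPrimitiveIdem.mul_eq_zero_of_ne (he : IsPrimitiveIdem e) (hf : IsPrimitiveIdem f)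
    (hne : e ≠ f) : e * f = 0 := by
  have hidem : IsIdempotentElem (e * f) := he.1.mul hf.1
  obtain h | h := he.eq_zero_or_eq_of_mul_eq hidem (by rw [mul_right_comm, he.1.eq])
  · exact h
  obtain h' | h' := hf.eq_zero_or_eq_of_mul_eq hidem (by rw [mul_assoc, hf.1.eq])
  · exact h'
  exact absurd (h.symm.trans h') hne

lemma IsPrimitiveIdem.map {S : Type*} [CommRing S] (φ : R ≃+* S) (he : IsPrimitiveIdem e) :
    IsPrimitiveIdem (φ e) := by
  refine ⟨he.1.map φ, (map_ne_zero_iff φ φ.injective).mpr he.2.1, ?_⟩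
  rintro ⟨a, b, ha, hb, ha0, hb0, hab, hsum⟩
  refine he.2.2 ⟨φ.symm a, φ.symm b, ha.map φ.symm, hb.map φ.symm, by simpa, by simpa, ?_, ?_⟩
  · rw [← map_mul, hab, map_zero]
  · rw [← map_add, ← hsum, φ.symm_apply_apply]

end Primitive

section Corner

variable (F : Type*) {R : Type*} [CommRing F] [CommRing R] [Algebra F R] {ε : R}

def cornerHom (hε : IsIdempotentElem ε) :
    R ⧸ Ideal.span {1 - ε} →ₙₐ[F] R where
  toFun := (Ideal.span {1 - ε}).liftQ (LinearMap.toSpanSingleton R R ε)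
    hε.ker_toSpanSingleton_eq_span.ge
  map_smul' c k := by
    rw [MonoidHom.id_apply, ← algebraMap_smul R c k, map_smul, algebraMap_smul]
  map_zero' := map_zero _
  map_add' := map_add _
  map_mul' k l := by
    obtain ⟨y, rfl⟩ := Ideal.Quotient.mk_surjective k
    obtain ⟨z, rfl⟩ := Ideal.Quotient.mk_surjective l
    show (y * z) • ε = (y • ε) * (z • ε)
    simp only [smul_eq_mul]
    linear_combination -(y * z) * hε.eq

variable (hε : IsIdempotentElem ε)
include hε

@[simp]
lemma cornerHom_mk (y : R) :
    cornerHom F hε (Ideal.Quotient.mk _ y) = y * ε :=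
  rfl

lemma cornerHom_one : cornerHom F hε 1 = ε := by
  rw [← map_one (Ideal.Quotient.mk _), cornerHom_mk, one_mul]

lemma cornerHom_injective : Function.Injective (cornerHom F hε) := by
  refine (injective_iff_map_eq_zero _).mpr fun k hk => ?_
  obtain ⟨y, rfl⟩ := Ideal.Quotient.mk_surjective k
  rw [Ideal.Quotient.eq_zero_iff_mem, ← hε.ker_toSpanSingleton_eq_span]
  exact hk

end Corner

theorem isField_quotient_span_one_sub {R : Type*} [CommRing R] [Finite R] [IsReduced R] {ε : R}
    (he : IsPrimitiveIdem ε) : IsField (R ⧸ Ideal.span {1 - ε}) := by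
  have hε := he.1
  have hinj := cornerHom_injective R hε
  have : IsLocalization.Away ε (R ⧸ Ideal.span {1 - ε}) :=
    IsLocalization.Away.quotient_of_isIdempotentElem hε
  have : IsReduced (R ⧸ Ideal.span {1 - ε}) := isReduced_localizationPreserves (.powers ε) _ ‹_›
  have : Nontrivial (R ⧸ Ideal.span {1 - ε}) :=
    ⟨1, 0, fun h => he.2.1 (by rw [← cornerHom_one R hε, h, map_zero])⟩
  have : Finite (R ⧸ Ideal.span {1 - ε}) := Finite.of_surjective _ Ideal.Quotient.mk_surjective
  refine isField_of_isIdempotentElem_eq_zero_or_one fun k hk => ?_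
  have hfix : cornerHom R hε k * ε = cornerHom R hε k :=
    calc cornerHom R hε k * ε = cornerHom R hε k * cornerHom R hε 1 := by rw [cornerHom_one]
      _ = cornerHom R hε k := by rw [← map_mul, mul_one]
  obtain h | h := he.eq_zero_or_eq_of_mul_eq (hk.map (cornerHom R hε)) hfix
  · exact .inl (hinj (h.trans (map_zero _).symm))
  · exact .inr (hinj (h.trans (cornerHom_one R hε).symm))

lemma mul_mul_cancel_of_mul_self_eq_one {M : Type*} [Monoid M] {v : M} (hv : v * v = 1)
    (x : M) : x * v * v = x := by
  rw [mul_assoc, hv, mul_one]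

section MatrixMap

variable {F K A : Type*} [CommRing F] [Ring K] [Ring A] [Algebra F K] [Algebra F A]
  (φ : K →ₙₐ[F] A) (v : A)

def matrixMap : Matrix (Fin 2) (Fin 2) K →ₗ[F] A where
  toFun M := φ (M 0 0) + φ (M 0 1) * v + v * φ (M 1 0) + v * φ (M 1 1) * v
  map_add' M N := by
    simp only [Matrix.add_apply, map_add, add_mul, mul_add]
    abel
  map_smul' c M := by
    simp only [Matrix.smul_apply, map_smul, smul_mul_assoc, mul_smul_comm, smul_add,
      RingHom.id_apply]

lemma matrixMap_apply (M : Matrix (Fin 2) (Fin 2) K) :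
    matrixMap φ v M = φ (M 0 0) + φ (M 0 1) * v + v * φ (M 1 0) + v * φ (M 1 1) * v :=
  rfl

lemma matrixMap_one : matrixMap φ v 1 = φ 1 + v * φ 1 * v := by
  simp [matrixMap_apply]

variable {φ v} (hv : v * v = 1)
include hv

lemma mul_matrixMap (M : Matrix (Fin 2) (Fin 2) K) :
    v * matrixMap φ v M = matrixMap φ v !![M 1 0, M 1 1; M 0 0, M 0 1] := by
  simp only [matrixMap_apply, Matrix.of_apply, Matrix.cons_val', Matrix.cons_val_zero,
    Matrix.cons_val_one, Matrix.empty_val', Matrix.cons_val_fin_one, mul_add, ← mul_assoc, hv,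
    one_mul]
  abel

lemma map_matrixMap_of_map_mul_rev (β : A →+ A) (hβ : ∀ x y, β (x * y) = β y * β x)
    (hβφ : ∀ k, β (φ k) = v * φ k * v) (hβv : β v = v) (a b c d : K) :
    β (matrixMap φ v !![a, b; c, d]) = matrixMap φ v !![d, b; c, a] := by
  simp only [matrixMap_apply, Matrix.of_apply, Matrix.cons_val', Matrix.cons_val_zero,
    Matrix.cons_val_one, Matrix.empty_val', Matrix.cons_val_fin_one, map_add, hβ, hβφ, hβv,
    ← mul_assoc, hv, one_mul, mul_mul_cancel_of_mul_self_eq_one hv]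
  abel

variable (horth : ∀ k l, φ k * v * φ l = 0)
include horth

lemma matrixMap_mul (M N : Matrix (Fin 2) (Fin 2) K) :
    matrixMap φ v (M * N) = matrixMap φ v M * matrixMap φ v N := by
  have hvv : ∀ z, v * (v * z) = z := fun z => by rw [← mul_assoc, hv, one_mul]
  have hφφ : ∀ k l z, φ k * (φ l * z) = φ (k * l) * z := fun k l z => by
    rw [← mul_assoc, map_mul]
  have horth' : ∀ k l, φ k * (v * φ l) = 0 := fun k l => by rw [← mul_assoc, horth]
  have horth'' : ∀ k l z, φ k * (v * (φ l * z)) = 0 := fun k l z => by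
    rw [← mul_assoc, ← mul_assoc, horth, zero_mul]
  simp only [matrixMap_apply, Matrix.mul_apply, Fin.sum_univ_two, map_add, add_mul, mul_add,
    mul_assoc, hvv, hφφ, horth', horth'', mul_zero, add_zero, zero_add, ← map_mul]
  abel

lemma matrixMap_entry (M : Matrix (Fin 2) (Fin 2) K) (i j : Fin 2) :
    φ 1 * (v ^ (i : ℕ) * matrixMap φ v M * v ^ (j : ℕ)) * φ 1 = φ (M i j) := by
  fin_cases i <;> fin_cases j <;>
    simp only [matrixMap_apply, Fin.isValue, pow_zero, pow_one, one_mul, mul_one, add_mul,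
      mul_add, ← mul_assoc, mul_mul_cancel_of_mul_self_eq_one hv, horth, zero_mul, add_zero,
      zero_add, ← map_mul] <;> rfl

lemma matrixMap_injective (hφ : Function.Injective φ) : Function.Injective (matrixMap φ v) := by
  intro M N h
  ext i j
  apply hφ
  rw [← matrixMap_entry hv horth M, h, matrixMap_entry hv horth N]

end MatrixMap

lemma isReduced_adjoinRoot {K : Type*} [Field K] {f : K[X]} (hf : Squarefree f) :
    IsReduced (AdjoinRoot f) :=
  (Ideal.isRadical_iff_quotient_reduced _).mp (isRadical_iff_span_singleton.mp hf.isRadical)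

lemma AdjoinRoot.injective_of_linearIndependent {K A : Type*} [CommRing K] [Ring A]
    [Algebra K A] {f : K[X]} (hf : f.Monic) (φ : AdjoinRoot f →ₐ[K] A)
    (h : LinearIndependent K fun i : Fin f.natDegree => φ (AdjoinRoot.root f) ^ (i : ℕ)) :
    Function.Injective φ := by
  let pb := AdjoinRoot.powerBasis' hf
  refine LinearMap.injective_of_linearIndependent (f := φ.toLinearMap) pb.basis.span_eq ?_
  have hbasis : φ.toLinearMap ∘ pb.basis =
      (fun i : Fin f.natDegree => φ (AdjoinRoot.root f) ^ (i : ℕ)) ∘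
        Fin.cast (AdjoinRoot.powerBasis'_dim hf) := by
    funext i
    simp [pb]
  rw [hbasis]
  exact h.comp _ (Fin.cast_injective _)

@[simp]
lemma AlgHom.toNonUnitalAlgHom_apply {R A B : Type*} [CommSemiring R] [Semiring A] [Semiring B]
    [Algebra R A] [Algebra R B] (f : A →ₐ[R] B) (x : A) : f.toNonUnitalAlgHom x = f x :=
  rfl

section Dihedral

open MonoidAlgebra DihedralGroup

variable {F : Type*} [Field F] {n : ℕ}

lemma of_sr_zero_mul_self :
    of F (DihedralGroup n) (sr 0) * of F (DihedralGroup n) (sr 0) = 1 := by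
  rw [← map_mul, sr_mul_sr, sub_zero, ← one_def, map_one]

lemma barFG_of_sr_zero :
    barFG (of F (DihedralGroup n) (sr 0)) = of F (DihedralGroup n) (sr 0) := by
  rw [barFG_of, inv_sr]

lemma linearIndependent_of_r_one_pow [NeZero n] :
    LinearIndependent F fun i : Fin n => of F (DihedralGroup n) (r 1) ^ (i : ℕ) := by
  have hinj : Function.Injective fun i : Fin n => (r (i : ℕ) : DihedralGroup n) := by
    intro i j h
    have hval := congrArg ZMod.val (r.inj h)
    rwa [ZMod.val_cast_of_lt i.isLt, ZMod.val_cast_of_lt j.isLt, ← Fin.ext_iff] at hval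
  convert (MonoidAlgebra.basis _ F).linearIndependent.comp _ hinj using 1
  funext i
  simp

variable {σ : AdjoinRoot (X ^ n - 1 : F[X]) ≃ₐ[F] AdjoinRoot (X ^ n - 1 : F[X])}
  {ψ : AdjoinRoot (X ^ n - 1 : F[X]) →ₐ[F] MonoidAlgebra F (DihedralGroup n)}
  {ε : AdjoinRoot (X ^ n - 1 : F[X])}

variable (ψ) in
def cornerMatrixMap (hε : IsIdempotentElem ε) :
    Matrix (Fin 2) (Fin 2) (AdjoinRoot (X ^ n - 1 : F[X]) ⧸ Ideal.span {1 - ε}) →ₗ[F]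
      MonoidAlgebra F (DihedralGroup n) :=
  matrixMap (ψ.toNonUnitalAlgHom.comp (cornerHom F hε)) (of F (DihedralGroup n) (sr 0))

variable (hψ : ψ (AdjoinRoot.root _) = of F (DihedralGroup n) (r 1))
include hψ

lemma injective_of_map_root_eq_of_r_one [NeZero n] : Function.Injective ψ := by
  have hmonic : (X ^ n - 1 : F[X]).Monic := by
    rw [← C_1]
    exact monic_X_pow_sub_C (1 : F) (NeZero.ne n)
  have hdeg : (X ^ n - 1 : F[X]).natDegree = n := by
    rw [← C_1]
    exact natDegree_X_pow_sub_C
  refine AdjoinRoot.injective_of_linearIndependent hmonic ψ ?_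
  rw [hψ]
  exact linearIndependent_of_r_one_pow.comp (Fin.cast hdeg) (Fin.cast_injective hdeg)

lemma exists_eq_map_add_of_sr_zero_mul_map [NeZero n] (z : MonoidAlgebra F (DihedralGroup n)) :
    ∃ a b, z = ψ a + of F (DihedralGroup n) (sr 0) * ψ b := by
  have hr : ∀ i : ZMod n, of F (DihedralGroup n) (r i) = ψ (AdjoinRoot.root _ ^ i.val) :=
    fun i => by rw [map_pow, hψ, ← map_pow, r_one_pow, ZMod.natCast_zmod_val]
  induction z using MonoidAlgebra.induction_on with
  | of g =>
    cases g with
    | r i => exact ⟨AdjoinRoot.root _ ^ i.val, 0, by rw [hr, map_zero, mul_zero, add_zero]⟩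
    | sr i =>
      refine ⟨0, AdjoinRoot.root _ ^ i.val, ?_⟩
      rw [← hr, ← map_mul, sr_mul_r, zero_add, map_zero, zero_add]
  | add x y hx hy =>
    obtain ⟨a, b, rfl⟩ := hx
    obtain ⟨a', b', rfl⟩ := hy
    exact ⟨a + a', b + b', by rw [map_add, map_add, mul_add]; abel⟩
  | smul c x hx =>
    obtain ⟨a, b, rfl⟩ := hx
    exact ⟨c • a, c • b, by rw [map_smul, map_smul, smul_add, mul_smul_comm]⟩

variable (hbarψ : ∀ a, barFG (ψ a) = ψ (σ a))
include hbarψ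

lemma of_sr_zero_mul_map_mul_of_sr_zero (a : AdjoinRoot (X ^ n - 1 : F[X])) :
    of F (DihedralGroup n) (sr 0) * ψ a * of F (DihedralGroup n) (sr 0) = ψ (σ a) := by
  let c := MulSemiringAction.toAlgEquiv F (MonoidAlgebra F (DihedralGroup n))
    (ConjAct.toConjAct ((of F _).toHomUnits (sr 0 : DihedralGroup n)))
  have hc : ∀ z, c z = of F (DihedralGroup n) (sr 0) * z * of F (DihedralGroup n) (sr 0) :=
    fun z => by simp [c, ConjAct.units_smul_def, ← map_inv]
  -- on the generator: `s r s⁻¹ = r⁻¹`, and `bar r = r⁻¹`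
  have hcomp : (c : MonoidAlgebra F (DihedralGroup n) →ₐ[F] _).comp ψ = ψ.comp σ := by
    refine AdjoinRoot.algHom_ext ?_
    change c (ψ (AdjoinRoot.root _)) = ψ (σ (AdjoinRoot.root _))
    rw [hc, ← hbarψ, hψ, barFG_of, ← map_mul, ← map_mul, sr_mul_r, sr_mul_sr, inv_r, zero_add,
      zero_sub]
  rw [← hc]
  exact AlgHom.congr_fun hcomp a

lemma of_sr_zero_mul_map (a : AdjoinRoot (X ^ n - 1 : F[X])) :
    of F (DihedralGroup n) (sr 0) * ψ a = ψ (σ a) * of F (DihedralGroup n) (sr 0) := by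
  rw [← of_sr_zero_mul_map_mul_of_sr_zero hψ hbarψ,
    mul_mul_cancel_of_mul_self_eq_one of_sr_zero_mul_self]

lemma sigma_involutive [NeZero n] : Function.Involutive σ := fun a =>
  injective_of_map_root_eq_of_r_one hψ <| by
    rw [← of_sr_zero_mul_map_mul_of_sr_zero hψ hbarψ,
      ← of_sr_zero_mul_map_mul_of_sr_zero hψ hbarψ, ← mul_assoc, ← mul_assoc, of_sr_zero_mul_self,
      one_mul, mul_mul_cancel_of_mul_self_eq_one of_sr_zero_mul_self]

lemma map_add_map_mul_comm [NeZero n] (e : AdjoinRoot (X ^ n - 1 : F[X]))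
    (z : MonoidAlgebra F (DihedralGroup n)) :
    (ψ e + ψ (σ e)) * z = z * (ψ e + ψ (σ e)) := by
  have hψ_comm : ∀ a, Commute (ψ e + ψ (σ e)) (ψ a) := fun a => by
    rw [← map_add]
    exact (Commute.all _ a).map ψ
  have hsr_comm : Commute (ψ e + ψ (σ e)) (of F (DihedralGroup n) (sr 0)) := by
    rw [Commute, SemiconjBy, mul_add, of_sr_zero_mul_map hψ hbarψ, of_sr_zero_mul_map hψ hbarψ,
      sigma_involutive hψ hbarψ, add_mul, add_comm]
  obtain ⟨a, b, rfl⟩ := exists_eq_map_add_of_sr_zero_mul_map hψ z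
  exact ((hψ_comm a).add_right (hsr_comm.mul_right (hψ_comm b))).eq

variable (hε : IsIdempotentElem ε)

lemma cornerMatrixMap_one : cornerMatrixMap ψ hε 1 = ψ ε + ψ (σ ε) := by
  rw [cornerMatrixMap, matrixMap_one]
  simp only [NonUnitalAlgHom.comp_apply, cornerHom_one, AlgHom.toNonUnitalAlgHom_apply]
  rw [of_sr_zero_mul_map_mul_of_sr_zero hψ hbarψ]

lemma barFG_cornerMatrixMap (a b c d : AdjoinRoot (X ^ n - 1 : F[X]) ⧸ Ideal.span {1 - ε}) :
    barFG (cornerMatrixMap ψ hε !![a, b; c, d]) = cornerMatrixMap ψ hε !![d, b; c, a] :=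
  map_matrixMap_of_map_mul_rev of_sr_zero_mul_self barFGAddHom barFG_mul
    (fun _ => (hbarψ _).trans (of_sr_zero_mul_map_mul_of_sr_zero hψ hbarψ _).symm)
    barFG_of_sr_zero a b c d

variable {hε} (horth : ε * σ ε = 0)
include horth

lemma map_cornerHom_mul_of_sr_zero_mul_map_cornerHom (k l) :
    ψ (cornerHom F hε k) * of F (DihedralGroup n) (sr 0) * ψ (cornerHom F hε l) = 0 := by
  obtain ⟨y, rfl⟩ := Ideal.Quotient.mk_surjective k
  obtain ⟨z, rfl⟩ := Ideal.Quotient.mk_surjective l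
  have hzero : y * ε * σ (z * ε) = 0 := by
    rw [map_mul]
    linear_combination (y * σ z) * horth
  rw [mul_assoc, of_sr_zero_mul_map hψ hbarψ, ← mul_assoc, cornerHom_mk, cornerHom_mk, ← map_mul,
    hzero, map_zero, zero_mul]

lemma cornerMatrixMap_mul (M N) :
    cornerMatrixMap ψ hε (M * N) = cornerMatrixMap ψ hε M * cornerMatrixMap ψ hε N :=
  matrixMap_mul of_sr_zero_mul_self
    (fun k l => by simpa only [NonUnitalAlgHom.comp_apply, AlgHom.toNonUnitalAlgHom_apply] using
      map_cornerHom_mul_of_sr_zero_mul_map_cornerHom hψ hbarψ horth k l) M N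

lemma cornerMatrixMap_injective [NeZero n] : Function.Injective (cornerMatrixMap ψ hε) :=
  matrixMap_injective of_sr_zero_mul_self
    (fun k l => by simpa only [NonUnitalAlgHom.comp_apply, AlgHom.toNonUnitalAlgHom_apply] using
      map_cornerHom_mul_of_sr_zero_mul_map_cornerHom hψ hbarψ horth k l)
    ((injective_of_map_root_eq_of_r_one hψ).comp (cornerHom_injective F hε))

lemma range_cornerMatrixMap [NeZero n] :
    Set.range (cornerMatrixMap ψ hε) = Set.range (· * (ψ ε + ψ (σ ε))) := by
  have hdiag : ∀ a, ψ a * cornerMatrixMap ψ hε 1 = cornerMatrixMap ψ hε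
      !![Ideal.Quotient.mk _ a, 0; 0, Ideal.Quotient.mk _ (σ a)] := fun a => by
    rw [cornerMatrixMap_one hψ hbarψ hε, cornerMatrixMap, matrixMap_apply]
    simp only [NonUnitalAlgHom.comp_apply, AlgHom.toNonUnitalAlgHom_apply, Matrix.of_apply,
      Matrix.cons_val', Matrix.cons_val_zero, Matrix.cons_val_one, Matrix.empty_val',
      Matrix.cons_val_fin_one, map_zero, zero_mul, mul_zero, add_zero, cornerHom_mk]
    rw [of_sr_zero_mul_map_mul_of_sr_zero hψ hbarψ, map_mul σ, sigma_involutive hψ hbarψ,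
      mul_add, ← map_mul, ← map_mul]
  rw [← cornerMatrixMap_one hψ hbarψ hε]
  ext x
  constructor
  · rintro ⟨M, rfl⟩
    refine ⟨cornerMatrixMap ψ hε M, ?_⟩
    dsimp only
    rw [← cornerMatrixMap_mul hψ hbarψ horth, mul_one]
  · rintro ⟨z, rfl⟩
    obtain ⟨a, b, rfl⟩ := exists_eq_map_add_of_sr_zero_mul_map hψ z
    dsimp only
    rw [add_mul, mul_assoc, hdiag, hdiag, cornerMatrixMap, mul_matrixMap of_sr_zero_mul_self,
      ← map_add]
    exact ⟨_, rfl⟩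

end Dihedral

theorem consta_dihedral_stmt18_general {F : Type*} [Field F] [Fintype F] (q : ℕ)
    (hq : q = Fintype.card F) (n : ℕ)
    (hcop : Nat.Coprime n q)
    (σ : AdjoinRoot (X ^ n - 1 : F[X]) ≃ₐ[F] AdjoinRoot (X ^ n - 1 : F[X]))
    (ψ : AdjoinRoot (X ^ n - 1 : F[X]) →ₐ[F] MonoidAlgebra F (DihedralGroup n))
    (hψ : ψ (AdjoinRoot.root _) = MonoidAlgebra.of F (DihedralGroup n) (DihedralGroup.r 1))
    (hbarψ : ∀ a, barFG (ψ a) = ψ (σ a))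
    (ε : AdjoinRoot (X ^ n - 1 : F[X])) (hprim : IsPrimitiveIdem ε) (hε : σ ε ≠ ε) :
    (IsIdempotentElem (ψ ε + ψ (σ ε)) ∧
      ∀ z : MonoidAlgebra F (DihedralGroup n),
        (ψ ε + ψ (σ ε)) * z = z * (ψ ε + ψ (σ ε))) ∧
    Finite (AdjoinRoot (X ^ n - 1 : F[X]) ⧸ Ideal.span {1 - ε}) ∧
    IsField (AdjoinRoot (X ^ n - 1 : F[X]) ⧸ Ideal.span {1 - ε}) ∧
    ∃ Φ : Matrix (Fin 2) (Fin 2) (AdjoinRoot (X ^ n - 1 : F[X]) ⧸ Ideal.span {1 - ε})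
        →ₗ[F] MonoidAlgebra F (DihedralGroup n),
      Function.Injective Φ ∧
      Φ 1 = ψ ε + ψ (σ ε) ∧
      (∀ m m', Φ (m * m') = Φ m * Φ m') ∧
      Set.range Φ = Set.range (fun z : MonoidAlgebra F (DihedralGroup n) =>
        z * (ψ ε + ψ (σ ε))) ∧
      ∀ a b c d : AdjoinRoot (X ^ n - 1 : F[X]) ⧸ Ideal.span {1 - ε},
        barFG (Φ !![a, b; c, d]) = Φ !![d, b; c, a] := by
  have hnF : (n : F) ≠ 0 := natCast_ne_zero_of_coprime_card (hq ▸ hcop)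
  have : NeZero n := ⟨by rintro rfl; exact hnF Nat.cast_zero⟩
  have : Module.Finite F (AdjoinRoot (X ^ n - 1 : F[X])) :=
    (AdjoinRoot.powerBasis (X_pow_sub_C_ne_zero (NeZero.pos n) (1 : F))).finite
  have : Finite (AdjoinRoot (X ^ n - 1 : F[X])) := Module.finite_of_finite F
  have : IsReduced (AdjoinRoot (X ^ n - 1 : F[X])) := isReduced_adjoinRoot (by
    simpa using (separable_X_pow_sub_C (1 : F) hnF one_ne_zero).squarefree)
  have horth : ε * σ ε = 0 := hprim.mul_eq_zero_of_ne (hprim.map σ.toRingEquiv) hε.symm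
  refine ⟨⟨(hprim.1.map ψ).add (hprim.1.map σ |>.map ψ) ?_, map_add_map_mul_comm hψ hbarψ ε⟩,
    Finite.of_surjective _ Ideal.Quotient.mk_surjective, isField_quotient_span_one_sub hprim,
    cornerMatrixMap ψ hprim.1, cornerMatrixMap_injective hψ hbarψ horth,
    cornerMatrixMap_one hψ hbarψ hprim.1, cornerMatrixMap_mul hψ hbarψ horth,
    range_cornerMatrixMap hψ hbarψ horth, barFG_cornerMatrixMap hψ hbarψ hprim.1⟩
  rw [← map_mul, ← map_mul, horth, mul_comm, horth, map_zero, add_zero]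

/-- Let `ε` be a primitive idempotent of `R_n` with `σ(ε) ≠ ε` and set
`e = ψ(ε)`, `ē = ψ(σ(ε)) ∈ FG`, `G` the dihedral group of order `2n`. Then `e + ē` is a
central idempotent of `FG`; `K := R_n/(1−ε)R_n` is a finite field; and there is an
injective `F`-linear multiplicative map `Φ : M₂(K) → FG` with `Φ(I₂) = e + ē`, image the
two-sided ideal `FG·(e + ē)`, and `bar(Φ [[a,b],[c,d]]) = Φ [[d,b],[c,a]]`. -/
theorem consta_dihedral_stmt18 {F : Type*} [Field F] [Fintype F] (q : ℕ)
    (hq : q = Fintype.card F) (n : ℕ) (hn : 1 < n) (hodd : Odd n)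
    (hcop : Nat.Coprime n q)
    (σ : AdjoinRoot (X ^ n - 1 : F[X]) ≃ₐ[F] AdjoinRoot (X ^ n - 1 : F[X]))
    (hσ : σ (AdjoinRoot.root _) = (AdjoinRoot.root _) ^ (n - 1))
    (ψ : AdjoinRoot (X ^ n - 1 : F[X]) →ₐ[F] MonoidAlgebra F (DihedralGroup n))
    (hψ : ψ (AdjoinRoot.root _) = MonoidAlgebra.of F (DihedralGroup n) (DihedralGroup.r 1))
    (hbarψ : ∀ a, barFG (ψ a) = ψ (σ a))
    (ε : AdjoinRoot (X ^ n - 1 : F[X])) (hprim : IsPrimitiveIdem ε) (hε : σ ε ≠ ε) :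
    (IsIdempotentElem (ψ ε + ψ (σ ε)) ∧
      ∀ z : MonoidAlgebra F (DihedralGroup n),
        (ψ ε + ψ (σ ε)) * z = z * (ψ ε + ψ (σ ε))) ∧
    Finite (AdjoinRoot (X ^ n - 1 : F[X]) ⧸ Ideal.span {1 - ε}) ∧
    IsField (AdjoinRoot (X ^ n - 1 : F[X]) ⧸ Ideal.span {1 - ε}) ∧
    ∃ Φ : Matrix (Fin 2) (Fin 2) (AdjoinRoot (X ^ n - 1 : F[X]) ⧸ Ideal.span {1 - ε})
        →ₗ[F] MonoidAlgebra F (DihedralGroup n),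
      Function.Injective Φ ∧
      Φ 1 = ψ ε + ψ (σ ε) ∧
      (∀ m m', Φ (m * m') = Φ m * Φ m') ∧
      Set.range Φ = Set.range (fun z : MonoidAlgebra F (DihedralGroup n) =>
        z * (ψ ε + ψ (σ ε))) ∧
      ∀ a b c d : AdjoinRoot (X ^ n - 1 : F[X]) ⧸ Ideal.span {1 - ε},
        barFG (Φ !![a, b; c, d]) = Φ !![d, b; c, a] :=
  consta_dihedral_stmt18_general q hq n hcop σ ψ hψ hbarψ ε hprim hε

end CDC
end
end
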